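/- arXiv:2104.13999 — 5 statements merged into one kernel-verified Lean document; each statement's English description precedes it below -/
import Mathlib

section
/- Let a, b, d, U > 0. Define U'(L) = min{ 2bU − 4L·b²U²/(a²d²), 4L·bU/d − 2b²U²/(a²d) } for L ∈ ℝ. Then U'(d/2) = 2bU·(1 − bU/(a²d)), and U'(L) ≤ U'(d/2) for every L ∈ ℝ; i.e., L = d/2 maximizes U'. -/
/-- The allowable transformed control bound
`U'(L) = min (2bU − 4L b²U²/(a²d²)) (4L bU/d − 2 b²U²/(a²d))` attains its
maximum at `L = d/2`, with value `2bU (1 − bU/(a²d))`. -/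
theorem stmt2 (a b d U : ℝ) (ha : 0 < a) (hb : 0 < b) (hd : 0 < d) (hU : 0 < U)
    (U' : ℝ → ℝ)
    (hU'def : ∀ L : ℝ, U' L =
      min (2 * b * U - 4 * L * b ^ 2 * U ^ 2 / (a ^ 2 * d ^ 2))
          (4 * L * b * U / d - 2 * b ^ 2 * U ^ 2 / (a ^ 2 * d))) :
    U' (d / 2) = 2 * b * U * (1 - b * U / (a ^ 2 * d)) ∧
      ∀ L : ℝ, U' L ≤ U' (d / 2) := by
  have ha' := ha.ne'
  have hd' := hd.ne'
  have heq : U' (d / 2) = 2 * b * U * (1 - b * U / (a ^ 2 * d)) := by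
    rw [hU'def]
    have h1 : 2 * b * U - 4 * (d / 2) * b ^ 2 * U ^ 2 / (a ^ 2 * d ^ 2)
        = 2 * b * U * (1 - b * U / (a ^ 2 * d)) := by field_simp; ring
    have h2 : 4 * (d / 2) * b * U / d - 2 * b ^ 2 * U ^ 2 / (a ^ 2 * d)
        = 2 * b * U * (1 - b * U / (a ^ 2 * d)) := by field_simp; ring
    rw [h1, h2, min_self]
  refine ⟨heq, fun L => ?_⟩
  rw [heq, hU'def]
  rcases le_total L (d / 2) with h | h
  · refine min_le_of_right_le ?_
    have : 4 * L * b * U / d ≤ 4 * (d / 2) * b * U / d := by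
      gcongr
    have h2 : 4 * (d / 2) * b * U / d - 2 * b ^ 2 * U ^ 2 / (a ^ 2 * d)
        = 2 * b * U * (1 - b * U / (a ^ 2 * d)) := by field_simp; ring
    linarith
  · refine min_le_of_left_le ?_
    have : 4 * (d / 2) * b ^ 2 * U ^ 2 / (a ^ 2 * d ^ 2)
        ≤ 4 * L * b ^ 2 * U ^ 2 / (a ^ 2 * d ^ 2) := by
      gcongr
    have h1 : 2 * b * U - 4 * (d / 2) * b ^ 2 * U ^ 2 / (a ^ 2 * d ^ 2)
        = 2 * b * U * (1 - b * U / (a ^ 2 * d)) := by field_simp; ring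
    linarith
end

section
/- Let a, b, L ∈ ℝ with L ≠ 0, and let x, y, θ, v, ω, u_v, u_ω : ℝ → ℝ. Fix t ∈ ℝ and suppose x'(t) = v(t)cos θ(t), y'(t) = v(t)sin θ(t), θ'(t) = ω(t), v'(t) = −a v(t) + b u_v(t), ω'(t) = −a ω(t) + b u_ω(t). Define η₁ = x + L cos θ, ξ₁ = y + L sin θ, η₂ = v cos θ − Lω sin θ, ξ₂ = v sin θ + Lω cos θ, and u_η = cos θ·(−Lω² − a v + b u_v) − sin θ·(vω − aLω + bL u_ω), u_ξ = sin θ·(−Lω² − a v + b u_v) + cos θ·(vω − aLω + bL u_ω). Then at t: η₁'(t) = η₂(t), η₂'(t) = u_η(t), ξ₁'(t) = ξ₂(t), ξ₂'(t) = u_ξ(t), and θ'(t) = (ξ₂(t)cos θ(t) − η₂(t)sin θ(t))/L. -/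
open Real

/-! Since `R_θ' = θ' · R_θ J` with `J` the rotation by `π/2`, a rotated vector `R_θ w` has derivative
`R_θ (w' + ω J w)`. Applied to `w = (v, Lω)` this gives the new inputs `(u_η, u_ξ)`; applied to the
offset `(L, 0)` it gives `(η₂, ξ₂)`, since `ẋ, ẏ` already equal `R_θ (v, 0)`. Undoing the rotation
of `(η₂, ξ₂)` recovers `Lω`, which is the zero dynamic. -/

section Rotation

variable {f g θ : ℝ → ℝ} {f' g' ω t : ℝ}

theorem hasDerivAt_rotate_fst (hf : HasDerivAt f f' t) (hg : HasDerivAt g g' t)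
    (hθ : HasDerivAt θ ω t) :
    HasDerivAt (fun s => f s * cos (θ s) - g s * sin (θ s))
      ((f' - ω * g t) * cos (θ t) - (g' + ω * f t) * sin (θ t)) t :=
  ((hf.mul hθ.cos).sub (hg.mul hθ.sin)).congr_deriv (by ring)

theorem hasDerivAt_rotate_snd (hf : HasDerivAt f f' t) (hg : HasDerivAt g g' t)
    (hθ : HasDerivAt θ ω t) :
    HasDerivAt (fun s => f s * sin (θ s) + g s * cos (θ s))
      ((f' - ω * g t) * sin (θ t) + (g' + ω * f t) * cos (θ t)) t :=
  ((hf.mul hθ.sin).add (hg.mul hθ.cos)).congr_deriv (by ring)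

end Rotation

theorem rotate_snd_mul_cos_sub_rotate_fst_mul_sin (p q α : ℝ) :
    (p * sin α + q * cos α) * cos α - (p * cos α - q * sin α) * sin α = q := by
  linear_combination q * sin_sq_add_cos_sq α

/-- Feedback linearization of the unicycle robot: the change of coordinates
`(η₁, ξ₁) = (x, y) + R_θ (L, 0)ᵀ`, `(η₂, ξ₂) = R_θ (v, Lω)ᵀ` with transformed
inputs `(u_η, u_ξ) = R_θ (−Lω² − av + bu_v, vω − aLω + bLu_ω)ᵀ` turns the
dynamics into two double integrators plus the zero dynamic
`θ' = (ξ₂ cos θ − η₂ sin θ)/L`. -/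
theorem stmt3 (a b L : ℝ) (hL : L ≠ 0)
    (x y θ v ω u_v u_ω : ℝ → ℝ) (t : ℝ)
    (hx : HasDerivAt x (v t * cos (θ t)) t)
    (hy : HasDerivAt y (v t * sin (θ t)) t)
    (hθ : HasDerivAt θ (ω t) t)
    (hv : HasDerivAt v (-a * v t + b * u_v t) t)
    (hω : HasDerivAt ω (-a * ω t + b * u_ω t) t)
    (η₁ ξ₁ η₂ ξ₂ u_η u_ξ : ℝ → ℝ)
    (hη₁ : η₁ = fun s => x s + L * cos (θ s))
    (hξ₁ : ξ₁ = fun s => y s + L * sin (θ s))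
    (hη₂ : η₂ = fun s => v s * cos (θ s) - L * ω s * sin (θ s))
    (hξ₂ : ξ₂ = fun s => v s * sin (θ s) + L * ω s * cos (θ s))
    (hu_η : u_η = fun s => cos (θ s) * (-L * (ω s) ^ 2 - a * v s + b * u_v s)
      - sin (θ s) * (v s * ω s - a * L * ω s + b * L * u_ω s))
    (hu_ξ : u_ξ = fun s => sin (θ s) * (-L * (ω s) ^ 2 - a * v s + b * u_v s)
      + cos (θ s) * (v s * ω s - a * L * ω s + b * L * u_ω s)) :
    HasDerivAt η₁ (η₂ t) t ∧ HasDerivAt η₂ (u_η t) t ∧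
    HasDerivAt ξ₁ (ξ₂ t) t ∧ HasDerivAt ξ₂ (u_ξ t) t ∧
    ω t = (ξ₂ t * cos (θ t) - η₂ t * sin (θ t)) / L := by
  subst hη₁ hξ₁ hη₂ hξ₂ hu_η hu_ξ
  have hLω := hω.const_mul L
  refine ⟨?_, ?_, ?_, ?_, ?_⟩
  · exact (hx.add (hθ.cos.const_mul L)).congr_deriv (by ring)
  · exact (hasDerivAt_rotate_fst hv hLω hθ).congr_deriv (by ring)
  · exact (hy.add (hθ.sin.const_mul L)).congr_deriv (by ring)
  · exact (hasDerivAt_rotate_snd hv hLω hθ).congr_deriv (by ring)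
  · rw [rotate_snd_mul_cos_sub_rotate_fst_mul_sin, mul_div_cancel_left₀ _ hL]
end

section
/- Let L > 0, v_r > 0, ω_r > 0, set φ = arctan(v_r/(Lω_r)), and define f(θ̃) = (√(L²ω_r² + v_r²)/L)·(cos(θ̃ + φ) − cos φ). Let θ̃ : [0, ∞) → ℝ be differentiable with θ̃'(t) = f(θ̃(t)) for all t ≥ 0 and θ̃(0) ∈ (−2φ, 2π − 2φ). Then θ̃(t) → 0 as t → ∞. -/
/-!
Between two zeros of a Lipschitz vector field `f` on `ℝ`, a solution of `x' = f x` can never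
reach either zero (uniqueness of solutions through an equilibrium), so it stays in the interval,
is monotone there, and converges. Its limit is again a zero of `f`, because a convergent solution
whose derivative also converges must have derivative tending to `0`. Since
`cos (θ + φ) - cos φ = -2 sin (θ / 2 + φ) sin (θ / 2)`, the vector field of the zero dynamics
vanishes at `-2φ`, `0`, `2π - 2φ`, is positive on `(-2φ, 0)` and negative on `(0, 2π - 2φ)`;
hence every solution starting in `(-2φ, 2π - 2φ)` converges to `0`.
-/

open Real Filter Set Topology

theorem AntitoneOn.exists_tendsto_atTop {u : ℝ → ℝ} {a : ℝ} (hu : AntitoneOn u (Ici a))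
    (hbdd : BddBelow (u '' Ici a)) : ∃ l, Tendsto u atTop (𝓝 l) := by
  have hanti : Antitone fun t => u (max t a) := fun s t hst =>
    hu (le_max_right s a) (le_max_right t a) (max_le_max_right a hst)
  have hbdd' : BddBelow (range fun t => u (max t a)) :=
    hbdd.mono (range_subset_iff.2 fun t => mem_image_of_mem u (le_max_right t a))
  refine ⟨_, (tendsto_atTop_ciInf hanti hbdd').congr' ?_⟩
  filter_upwards [eventually_ge_atTop a] with t ht using by rw [max_eq_left ht]

theorem eq_zero_of_tendsto_of_hasDerivAt {x x' : ℝ → ℝ} {l m : ℝ}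
    (hx : Tendsto x atTop (𝓝 l)) (hx' : Tendsto x' atTop (𝓝 m))
    (hderiv : ∀ᶠ t in atTop, HasDerivAt x (x' t) t) : m = 0 := by
  obtain ⟨T, hT⟩ := eventually_atTop.1 hderiv
  have hmvt : ∀ t, ∃ ξ, T ≤ t → ξ ∈ Ioo t (t + 1) ∧ x' ξ = x (t + 1) - x t := by
    intro t
    by_cases ht : T ≤ t
    · obtain ⟨ξ, hξ, hslope⟩ := exists_hasDerivAt_eq_slope x x' (lt_add_one t)
        (HasDerivAt.continuousOn fun s hs => hT s (ht.trans hs.1))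
        (fun s hs => hT s (ht.trans hs.1.le))
      exact ⟨ξ, fun _ => ⟨hξ, by rwa [add_sub_cancel_left, div_one] at hslope⟩⟩
    · exact ⟨0, fun h => absurd h ht⟩
  choose ξ hξ using hmvt
  have hξ_tendsto : Tendsto ξ atTop atTop :=
    tendsto_atTop_mono' atTop (eventually_atTop.2 ⟨T, fun t ht => (hξ t ht).1.1.le⟩) tendsto_id
  have hincr : Tendsto (fun t => x (t + 1) - x t) atTop (𝓝 (l - l)) :=
    (hx.comp (tendsto_atTop_add_const_right _ 1 tendsto_id)).sub hx
  refine tendsto_nhds_unique ((hx'.comp hξ_tendsto).congr' ?_) (sub_self l ▸ hincr)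
  exact eventually_atTop.2 ⟨T, fun t ht => (hξ t ht).2⟩

section AutonomousODE

variable {f : ℝ → ℝ} {K : NNReal} {x : ℝ → ℝ}

theorem eq_of_eq_equilibrium (hf : LipschitzWith K f)
    (hx : ∀ t ≥ (0 : ℝ), HasDerivAt x (f (x t)) t) {c : ℝ} (hc : f c = 0) {t₀ : ℝ}
    (ht₀ : 0 ≤ t₀) (hxt₀ : x t₀ = c) {t : ℝ} (ht : 0 ≤ t) : x t = c := by
  have hconst : ∀ s : ℝ, HasDerivAt (fun _ => c) (f c) s := fun s => hc ▸ hasDerivAt_const s c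
  have hcont : ∀ b, ContinuousOn x (Icc 0 b) :=
    fun b => HasDerivAt.continuousOn fun s hs => hx s hs.1
  have hx0 : x 0 = c :=
    ODE_solution_unique_of_mem_Icc_left (v := fun _ => f) (s := fun _ => univ)
      (fun _ _ => hf.lipschitzOnWith) (hcont t₀) (fun s hs => (hx s hs.1.le).hasDerivWithinAt)
      (fun _ _ => trivial) continuousOn_const (fun s _ => (hconst s).hasDerivWithinAt)
      (fun _ _ => trivial) hxt₀ ⟨le_rfl, ht₀⟩
  exact ODE_solution_unique (v := fun _ => f) (fun _ => hf) (hcont t)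
    (fun s hs => (hx s hs.1).hasDerivWithinAt) continuousOn_const
    (fun s _ => (hconst s).hasDerivWithinAt) hx0 ⟨ht, le_rfl⟩

theorem mem_Ioo_of_equilibria (hf : LipschitzWith K f)
    (hx : ∀ t ≥ (0 : ℝ), HasDerivAt x (f (x t)) t) {p q : ℝ} (hp : f p = 0) (hq : f q = 0)
    (hx0 : x 0 ∈ Ioo p q) {t : ℝ} (ht : 0 ≤ t) : x t ∈ Ioo p q := by
  have hcont : ContinuousOn x (Icc 0 t) := HasDerivAt.continuousOn fun s hs => hx s hs.1
  by_contra hout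
  rcases not_and_or.1 hout with hle | hge
  · obtain ⟨s, hs, hxs⟩ := intermediate_value_Icc' ht hcont ⟨not_lt.1 hle, hx0.1.le⟩
    exact hx0.1.ne' (eq_of_eq_equilibrium hf hx hp hs.1 hxs le_rfl)
  · obtain ⟨s, hs, hxs⟩ := intermediate_value_Icc ht hcont ⟨hx0.2.le, not_lt.1 hge⟩
    exact hx0.2.ne (eq_of_eq_equilibrium hf hx hq hs.1 hxs le_rfl)

theorem tendsto_left_equilibrium_of_neg (hf : LipschitzWith K f)
    (hx : ∀ t ≥ (0 : ℝ), HasDerivAt x (f (x t)) t) {p q : ℝ} (hp : f p = 0) (hq : f q = 0)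
    (hneg : ∀ y ∈ Ioo p q, f y < 0) (hx0 : x 0 ∈ Ioo p q) : Tendsto x atTop (𝓝 p) := by
  have hmem : ∀ t ≥ (0 : ℝ), x t ∈ Ioo p q := fun t ht =>
    mem_Ioo_of_equilibria hf hx hp hq hx0 ht
  have hanti : AntitoneOn x (Ici 0) :=
    antitoneOn_of_hasDerivWithinAt_nonpos (convex_Ici 0)
      (HasDerivAt.continuousOn fun t ht => hx t ht)
      (fun t ht => (hx t (interior_subset ht)).hasDerivWithinAt)
      (fun t ht => (hneg _ (hmem t (interior_subset ht))).le)
  obtain ⟨l, hl⟩ := hanti.exists_tendsto_atTop ⟨p, by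
    rintro _ ⟨t, ht, rfl⟩
    exact (hmem t ht).1.le⟩
  have hpl : p ≤ l := ge_of_tendsto hl <| eventually_atTop.2 ⟨0, fun t ht => (hmem t ht).1.le⟩
  have hlq : l < q := (le_of_tendsto hl <| eventually_atTop.2
    ⟨0, fun t ht => hanti self_mem_Ici ht ht⟩).trans_lt hx0.2
  have hfl : f l = 0 := eq_zero_of_tendsto_of_hasDerivAt hl
    ((hf.continuous.tendsto l).comp hl) (eventually_atTop.2 ⟨0, hx⟩)
  rcases hpl.eq_or_lt with rfl | hpl
  · exact hl
  · exact absurd hfl (hneg l ⟨hpl, hlq⟩).ne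

theorem tendsto_right_equilibrium_of_pos (hf : LipschitzWith K f)
    (hx : ∀ t ≥ (0 : ℝ), HasDerivAt x (f (x t)) t) {p q : ℝ} (hp : f p = 0) (hq : f q = 0)
    (hpos : ∀ y ∈ Ioo p q, 0 < f y) (hx0 : x 0 ∈ Ioo p q) : Tendsto x atTop (𝓝 q) := by
  have hg : LipschitzWith (K * 1) fun y => -f (-y) := (hf.comp LipschitzWith.id.neg).neg
  have hreflected : Tendsto (-x) atTop (𝓝 (-q)) :=
    tendsto_left_equilibrium_of_neg hg (fun t ht => by simpa using (hx t ht).neg)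
      (by simpa using hq) (by simpa using hp)
      (fun y hy => by simpa using hpos (-y) ⟨lt_neg.1 hy.2, neg_lt.1 hy.1⟩)
      ⟨neg_lt_neg hx0.2, neg_lt_neg hx0.1⟩
  simpa using hreflected.neg

theorem tendsto_stable_equilibrium (hf : LipschitzWith K f)
    (hx : ∀ t ≥ (0 : ℝ), HasDerivAt x (f (x t)) t) {a c b : ℝ}
    (ha : f a = 0) (hc : f c = 0) (hb : f b = 0)
    (hpos : ∀ y ∈ Ioo a c, 0 < f y) (hneg : ∀ y ∈ Ioo c b, f y < 0)
    (hx0 : x 0 ∈ Ioo a b) : Tendsto x atTop (𝓝 c) := by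
  rcases lt_trichotomy (x 0) c with hlt | heq | hgt
  · exact tendsto_right_equilibrium_of_pos hf hx ha hc hpos ⟨hx0.1, hlt⟩
  · refine tendsto_const_nhds.congr' (eventually_atTop.2 ⟨0, fun t ht => ?_⟩)
    exact (eq_of_eq_equilibrium hf hx hc le_rfl heq ht).symm
  · exact tendsto_left_equilibrium_of_neg hf hx hc hb hneg ⟨hgt, hx0.2⟩

end AutonomousODE

theorem Real.cos_add_sub_cos (θ φ : ℝ) :
    cos (θ + φ) - cos φ = -2 * (sin (θ / 2 + φ) * sin (θ / 2)) := by
  rw [cos_sub_cos, show (θ + φ + φ) / 2 = θ / 2 + φ by ring,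
    show (θ + φ - φ) / 2 = θ / 2 by ring]
  ring

theorem Real.cos_lt_cos_add {θ φ : ℝ} (hφ : φ ≤ π) (hθ : θ ∈ Ioo (-2 * φ) 0) :
    cos φ < cos (θ + φ) := by
  have h₁ : 0 < sin (θ / 2 + φ) :=
    sin_pos_of_pos_of_lt_pi (by linarith [hθ.1]) (by linarith [hθ.2])
  have h₂ : sin (θ / 2) < 0 :=
    sin_neg_of_neg_of_neg_pi_lt (by linarith [hθ.2]) (by linarith [hθ.1])
  have := cos_add_sub_cos θ φ
  nlinarith [mul_neg_of_pos_of_neg h₁ h₂]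

theorem Real.cos_add_lt_cos {θ φ : ℝ} (hφ : 0 ≤ φ) (hθ : θ ∈ Ioo 0 (2 * π - 2 * φ)) :
    cos (θ + φ) < cos φ := by
  have h₁ : 0 < sin (θ / 2 + φ) :=
    sin_pos_of_pos_of_lt_pi (by linarith [hθ.1]) (by linarith [hθ.2])
  have h₂ : 0 < sin (θ / 2) :=
    sin_pos_of_pos_of_lt_pi (by linarith [hθ.1]) (by linarith [hθ.2])
  have := cos_add_sub_cos θ φ
  nlinarith [mul_pos h₁ h₂]

/-- Every solution of the heading-error zero dynamics `θ̃' = f(θ̃)` starting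
strictly between the unstable equilibria `−2φ` and `2π − 2φ` converges to the
stable equilibrium `0`. -/
theorem stmt12 (L v_r ω_r : ℝ) (hL : 0 < L) (hv : 0 < v_r) (hω : 0 < ω_r)
    (φ : ℝ) (hφ : φ = arctan (v_r / (L * ω_r)))
    (f : ℝ → ℝ)
    (hf : f = fun θ' => Real.sqrt (L ^ 2 * ω_r ^ 2 + v_r ^ 2) / L *
      (cos (θ' + φ) - cos φ))
    (θ' : ℝ → ℝ)
    (hode : ∀ t ≥ (0:ℝ), HasDerivAt θ' (f (θ' t)) t)
    (h0 : θ' 0 ∈ Set.Ioo (-2 * φ) (2 * π - 2 * φ)) :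
    Tendsto θ' atTop (nhds 0) := by
  have hφ₀ : 0 < φ := hφ ▸ arctan_pos.2 (by positivity)
  have hφ_lt : φ < π / 2 := hφ ▸ arctan_lt_pi_div_two _
  set k := √(L ^ 2 * ω_r ^ 2 + v_r ^ 2) / L
  have hk : 0 < k := by positivity
  have hlip : LipschitzWith k.toNNReal f := .of_dist_le_mul fun θ η => by
    rw [coe_toNNReal k hk.le, hf, dist_eq, dist_eq, ← mul_sub, abs_mul, abs_of_pos hk,
      sub_sub_sub_cancel_right]
    simpa using mul_le_mul_of_nonneg_left (abs_cos_sub_cos_le (θ + φ) (η + φ)) hk.le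
  refine tendsto_stable_equilibrium hlip hode ?_ ?_ ?_ (fun θ hθ => ?_) (fun θ hθ => ?_) h0 <;>
    simp only [hf]
  · rw [show -2 * φ + φ = -φ by ring, cos_neg, sub_self, mul_zero]
  · rw [zero_add, sub_self, mul_zero]
  · rw [show 2 * π - 2 * φ + φ = 2 * π - φ by ring, cos_two_pi_sub, sub_self, mul_zero]
  · exact mul_pos hk (sub_pos.2 (cos_lt_cos_add (by linarith) hθ))
  · exact mul_neg_of_pos_of_neg hk (sub_neg.2 (cos_add_lt_cos hφ₀.le hθ))
end

section
/- Let x, y, x_o, y_o, β_o : ℝ → ℝ and v, θ, v_o, θ_o : ℝ → ℝ. Fix t with x'(t) = v(t)cos θ(t), y'(t) = v(t)sin θ(t), x_o'(t) = v_o(t)cos θ_o(t), y_o'(t) = v_o(t)sin θ_o(t). Let d_o(s) = √((x(s)−x_o(s))² + (y(s)−y_o(s))²) and suppose d_o(t) > 0, β_o is differentiable at t, and cos β_o(s) = (x(s)−x_o(s))/d_o(s) and sin β_o(s) = (y(s)−y_o(s))/d_o(s) for all s in a neighborhood of t. Then β_o'(t) = (v(t)·sin(θ(t) − β_o(t)) −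 v_o(t)·sin(θ_o(t) − β_o(t)))/d_o(t). -/
open Real

/-- Derivative of the bearing angle `β_o` of the vector from the obstacle point
to the robot: `β̇_o = (v sin(θ − β_o) − v_o sin(θ_o − β_o))/d_o`. -/
theorem stmt15 (x y x_o y_o β_o v θ v_o θ_o : ℝ → ℝ) (t : ℝ)
    (hx : HasDerivAt x (v t * cos (θ t)) t)
    (hy : HasDerivAt y (v t * sin (θ t)) t)
    (hxo : HasDerivAt x_o (v_o t * cos (θ_o t)) t)
    (hyo : HasDerivAt y_o (v_o t * sin (θ_o t)) t)
    (d_o : ℝ → ℝ)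
    (hdo : d_o = fun s => Real.sqrt ((x s - x_o s) ^ 2 + (y s - y_o s) ^ 2))
    (hpos : 0 < d_o t)
    (hβdiff : DifferentiableAt ℝ β_o t)
    (hβ : ∀ᶠ s in nhds t,
      cos (β_o s) = (x s - x_o s) / d_o s ∧
      sin (β_o s) = (y s - y_o s) / d_o s) :
    deriv β_o t =
      (v t * sin (θ t - β_o t) - v_o t * sin (θ_o t - β_o t)) / d_o t := by
  have hβd : HasDerivAt β_o (deriv β_o t) t := hβdiff.hasDerivAt
  set β' := deriv β_o t with hβ'
  have hu : HasDerivAt (fun s => x s - x_o s)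
      (v t * cos (θ t) - v_o t * cos (θ_o t)) t := hx.sub hxo
  have hw : HasDerivAt (fun s => y s - y_o s)
      (v t * sin (θ t) - v_o t * sin (θ_o t)) t := hy.sub hyo
  have hdc : ContinuousAt d_o t := by
    rw [hdo]
    exact ((hu.continuousAt.pow 2).add (hw.continuousAt.pow 2)).sqrt
  have hpos' : ∀ᶠ s in nhds t, 0 < d_o s := hdc.eventually (eventually_gt_nhds hpos)
  -- the function f vanishes near t
  have hf0 : (fun s => (x s - x_o s) * sin (β_o s) - (y s - y_o s) * cos (β_o s))
      =ᶠ[nhds t] fun _ => (0 : ℝ) := by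
    filter_upwards [hβ, hpos'] with s hs hds
    obtain ⟨h1, h2⟩ := hs
    have hd : d_o s ≠ 0 := ne_of_gt hds
    have hx1 : x s - x_o s = d_o s * cos (β_o s) := by
      rw [h1]; field_simp
    have hy1 : y s - y_o s = d_o s * sin (β_o s) := by
      rw [h2]; field_simp
    rw [hx1, hy1]; ring
  have hF : HasDerivAt (fun s => (x s - x_o s) * sin (β_o s) - (y s - y_o s) * cos (β_o s))
      ((v t * cos (θ t) - v_o t * cos (θ_o t)) * sin (β_o t)
        + (x t - x_o t) * (cos (β_o t) * β')
        - ((v t * sin (θ t) - v_o t * sin (θ_o t)) * cos (β_o t)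
        + (y t - y_o t) * (-sin (β_o t) * β'))) t :=
    (hu.mul hβd.sin).sub (hw.mul hβd.cos)
  have hFc : HasDerivAt (fun s => (x s - x_o s) * sin (β_o s) - (y s - y_o s) * cos (β_o s))
      0 t := (hasDerivAt_const t (0 : ℝ)).congr_of_eventuallyEq hf0
  have hE := hF.unique hFc
  obtain ⟨h1, h2⟩ := hβ.self_of_nhds
  have hd : d_o t ≠ 0 := ne_of_gt hpos
  have hx1 : x t - x_o t = d_o t * cos (β_o t) := by rw [h1]; field_simp
  have hy1 : y t - y_o t = d_o t * sin (β_o t) := by rw [h2]; field_simp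
  rw [hx1, hy1] at hE
  have hpy := sin_sq_add_cos_sq (β_o t)
  rw [eq_div_iff hd, sin_sub, sin_sub]
  linear_combination hE - β' * d_o t * hpy
end

section
/- Let a, b ∈ ℝ and x_o, y_o ∈ ℝ (a stationary obstacle point). Let x, y, θ, v, ω, u_v : ℝ → ℝ satisfy, on an open interval I, x' = v cos θ, y' = v sin θ, θ' = ω, v' = −a v + b u_v, with d_o(t) := √((x(t)−x_o)² + (y(t)−y_o)²) > 0 on I. Let β_o : I → ℝ be differentiable with cos β_o = (x−x_o)/d_o and sin β_o = (y−y_o)/d_o on I, and set δ = θ − β_o. Then d_o is twice differentiable on I with d_o''(t) = (−a v + b u_v)·cos δ − vω·sin δ + (v²/d_o)·sin² δ, all evaluated at t. -/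
/-!
Write `p − p_o = d_o (cos β_o, sin β_o)`. Differentiating `cos β_o = (x − x_o)/d_o` and
`sin β_o = (y − y_o)/d_o` splits the velocity `v (cos θ, sin θ)` into its radial part
`ḋ_o = v cos δ` and its angular part `β̇_o = v sin δ / d_o`. Differentiating `ḋ_o = v cos δ`
once more, with `δ̇ = ω − β̇_o`, gives the formula.
-/

open Real Filter Topology

section Polar

variable {X Y β : ℝ → ℝ} {v θ t : ℝ}

lemma hasDerivAt_of_cos_of_sin {c' s' : ℝ} (hβ : DifferentiableAt ℝ β t)
    (hc : HasDerivAt (fun s => cos (β s)) c' t) (hs : HasDerivAt (fun s => sin (β s)) s' t) :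
    HasDerivAt β (cos (β t) * s' - sin (β t) * c') t := by
  have hc' : c' = -sin (β t) * deriv β t := hc.unique hβ.hasDerivAt.cos
  have hs' : s' = cos (β t) * deriv β t := hs.unique hβ.hasDerivAt.sin
  refine hβ.hasDerivAt.congr_deriv ?_
  rw [hc', hs']
  linear_combination -deriv β t * sin_sq_add_cos_sq (β t)

lemma hasDerivAt_sqrt_sq_add_sq_of_polar (hX : HasDerivAt X (v * cos θ) t)
    (hY : HasDerivAt Y (v * sin θ) t) (hpos : 0 < √(X t ^ 2 + Y t ^ 2))
    (hcos : cos (β t) = X t / √(X t ^ 2 + Y t ^ 2))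
    (hsin : sin (β t) = Y t / √(X t ^ 2 + Y t ^ 2)) :
    HasDerivAt (fun s => √(X s ^ 2 + Y s ^ 2)) (v * cos (θ - β t)) t := by
  have hsq : HasDerivAt (fun s => X s ^ 2 + Y s ^ 2)
      (2 * X t * (v * cos θ) + 2 * Y t * (v * sin θ)) t :=
    ((hX.pow 2).add (hY.pow 2)).congr_deriv (by push_cast; ring)
  convert hsq.sqrt (sqrt_pos.mp hpos).ne' using 1
  rw [cos_sub, hcos, hsin]
  field_simp

/-- The contributions of `ṙ` to the derivatives of `X / r` and `Y / r` cancel. -/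
lemma hasDerivAt_polar_angle {r : ℝ → ℝ} {r' : ℝ} (hβ : DifferentiableAt ℝ β t)
    (hX : HasDerivAt X (v * cos θ) t) (hY : HasDerivAt Y (v * sin θ) t)
    (hr : HasDerivAt r r' t) (hr0 : r t ≠ 0)
    (hcos : ∀ᶠ s in 𝓝 t, cos (β s) = X s / r s) (hsin : ∀ᶠ s in 𝓝 t, sin (β s) = Y s / r s) :
    HasDerivAt β (v * sin (θ - β t) / r t) t := by
  have hc := (hX.div hr hr0).congr_of_eventuallyEq hcos
  have hs := (hY.div hr hr0).congr_of_eventuallyEq hsin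
  convert hasDerivAt_of_cos_of_sin hβ hc hs using 1
  rw [sin_sub, hcos.self_of_nhds, hsin.self_of_nhds]
  field_simp
  ring

end Polar

/-- Second derivative of the distance to a stationary obstacle point under the
nominal unicycle dynamics:
`d̈_o = (−a v + b u_v) cos δ − v ω sin δ + (v²/d_o) sin² δ` with `δ = θ − β_o`. -/
theorem stmt16 (a b x_o y_o : ℝ) (x y θ v ω u_v : ℝ → ℝ)
    (I : Set ℝ) (hI : IsOpen I)
    (hx : ∀ t ∈ I, HasDerivAt x (v t * cos (θ t)) t)
    (hy : ∀ t ∈ I, HasDerivAt y (v t * sin (θ t)) t)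
    (hθ : ∀ t ∈ I, HasDerivAt θ (ω t) t)
    (hv : ∀ t ∈ I, HasDerivAt v (-a * v t + b * u_v t) t)
    (d_o : ℝ → ℝ)
    (hdo : d_o = fun s => Real.sqrt ((x s - x_o) ^ 2 + (y s - y_o) ^ 2))
    (hpos : ∀ t ∈ I, 0 < d_o t)
    (β_o : ℝ → ℝ)
    (hβdiff : ∀ t ∈ I, DifferentiableAt ℝ β_o t)
    (hβcos : ∀ t ∈ I, cos (β_o t) = (x t - x_o) / d_o t)
    (hβsin : ∀ t ∈ I, sin (β_o t) = (y t - y_o) / d_o t) :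
    ∀ t ∈ I, DifferentiableAt ℝ d_o t ∧
      HasDerivAt (deriv d_o)
        ((-a * v t + b * u_v t) * cos (θ t - β_o t)
          - v t * ω t * sin (θ t - β_o t)
          + v t ^ 2 / d_o t * sin (θ t - β_o t) ^ 2) t := by
  have hd : ∀ t ∈ I, HasDerivAt d_o (v t * cos (θ t - β_o t)) t := fun t ht => by
    subst hdo
    exact hasDerivAt_sqrt_sq_add_sq_of_polar ((hx t ht).sub_const x_o)
      ((hy t ht).sub_const y_o) (hpos t ht) (hβcos t ht) (hβsin t ht)
  intro t ht
  have hnhds := hI.mem_nhds ht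
  have hβ : HasDerivAt β_o (v t * sin (θ t - β_o t) / d_o t) t :=
    hasDerivAt_polar_angle (hβdiff t ht) ((hx t ht).sub_const x_o) ((hy t ht).sub_const y_o)
      (hd t ht) (hpos t ht).ne' (eventually_of_mem hnhds hβcos) (eventually_of_mem hnhds hβsin)
  have hderiv : deriv d_o =ᶠ[𝓝 t] fun s => v s * cos (θ s - β_o s) :=
    eventually_of_mem hnhds fun s hs => (hd s hs).deriv
  refine ⟨(hd t ht).differentiableAt, ?_⟩
  refine (((hv t ht).mul ((hθ t ht).sub hβ).cos).congr_deriv ?_).congr_of_eventuallyEq hderiv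
  simp only [Pi.sub_apply]
  field_simp [(hpos t ht).ne']
  ring
end
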